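/- arXiv:2504.01543 — 6 statements merged into one kernel-verified Lean document; each statement's English description precedes it below -/
import Mathlib

section
/- Let n ≥ 1, x ∈ {0,1}^{n−1}, and 0 < β < α ≤ 1. Consider the Knapsack instance I(x) on n items with capacity K = 1, where item i has (profit, weight) = (x_i, 1) for 1 ≤ i ≤ n−1 and item n has (profit, weight) = (β, 1). Then the singleton {n} is a feasible solution with p({n}) ≥ α·OPT(I(x)) if and only if x_i = 0 for all i; moreover, when x_i = 0 for all i, {n} is the unique feasible solution attaining profit at least α·OPT(I(x)). -/
/-- The optimal value of a Knapsack instance with items indexed by `ι`,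
profits `p`, weights `w`, and capacity `K`. -/
noncomputable def KOPT {ι : Type*} [Fintype ι] (p w : ι → ℝ) (K : ℝ) : ℝ :=
  sSup {v : ℝ | ∃ S : Finset ι, ∑ i ∈ S, w i ≤ K ∧ ∑ i ∈ S, p i = v}

/-- The last item of an instance on `n ≥ 1` items. -/
def lastIdx (n : ℕ) (hn : 1 ≤ n) : Fin n := ⟨n - 1, by omega⟩

/-! With unit weights and capacity 1 the feasible sets are the empty set and the singletons.
If some `x i` is true, the item of profit 1 gives `OPT ≥ 1 > β / α`. If all `x i` are false,
every profit other than `β` vanishes, so `OPT = β ≥ α β`, and a feasible set of positive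
profit must contain, hence be, the last item. -/

theorem Finset.sum_eq_ite_mem_of_forall_ne {ι M : Type*} [DecidableEq ι] [AddCommMonoid M]
    {p : ι → M} {j : ι} (hp : ∀ i ≠ j, p i = 0) (S : Finset ι) :
    ∑ i ∈ S, p i = if j ∈ S then p j else 0 := by
  split_ifs with hj
  · exact Finset.sum_eq_single_of_mem j hj fun i _ hi => hp i hi
  · exact Finset.sum_eq_zero fun i hi => hp i (ne_of_mem_of_not_mem hi hj)

section Knapsack

variable {ι : Type*} [Fintype ι] {p w : ι → ℝ} {K : ℝ}

theorem sum_le_KOPT {S : Finset ι} (hS : ∑ i ∈ S, w i ≤ K) : ∑ i ∈ S, p i ≤ KOPT p w K := by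
  refine le_csSup ((Set.finite_range fun S : Finset ι => ∑ i ∈ S, p i).subset ?_).bddAbove
    ⟨S, hS, rfl⟩
  rintro _ ⟨T, -, rfl⟩
  exact ⟨T, rfl⟩

theorem KOPT_le {S₀ : Finset ι} (hS₀ : ∑ i ∈ S₀, w i ≤ K) {c : ℝ}
    (h : ∀ S : Finset ι, ∑ i ∈ S, w i ≤ K → ∑ i ∈ S, p i ≤ c) : KOPT p w K ≤ c :=
  csSup_le ⟨_, S₀, hS₀, rfl⟩ fun _ ⟨S, hS, hv⟩ => hv ▸ h S hS

theorem KOPT_eq_of_forall_ne_eq_zero {j : ι} (hj : w j ≤ K) (hpj : 0 ≤ p j)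
    (hp : ∀ i ≠ j, p i = 0) : KOPT p w K = p j := by
  have hsingle : ∑ i ∈ ({j} : Finset ι), w i ≤ K := by rwa [Finset.sum_singleton]
  refine le_antisymm (KOPT_le hsingle fun S _ => ?_) (by simpa using sum_le_KOPT (p := p) hsingle)
  classical
  rw [Finset.sum_eq_ite_mem_of_forall_ne hp]
  split_ifs
  exacts [le_rfl, hpj]

end Knapsack

theorem Finset.card_le_one_of_sum_le_one {ι : Type*} {w : ι → ℝ} (hw : ∀ i, w i = 1)
    {S : Finset ι} (hS : ∑ i ∈ S, w i ≤ 1) : S.card ≤ 1 := by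
  simp only [hw, Finset.sum_const, nsmul_eq_mul, mul_one] at hS
  exact_mod_cast hS

theorem Finset.eq_singleton_of_card_le_one_of_sum_pos {ι M : Type*} [AddCommMonoid M]
    [Preorder M] {p : ι → M} {j : ι}
    (hp : ∀ i ≠ j, p i = 0) {S : Finset ι} (hcard : S.card ≤ 1) (hpos : 0 < ∑ i ∈ S, p i) :
    S = {j} := by
  classical
  rw [Finset.sum_eq_ite_mem_of_forall_ne hp] at hpos
  have hj : j ∈ S := by
    by_contra hj
    simp only [hj, if_false, lt_irrefl] at hpos
  exact Finset.eq_singleton_iff_unique_mem.mpr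
    ⟨hj, fun i hi => Finset.card_le_one.mp hcard i hi j hj⟩

theorem stmt1 (n : ℕ) (hn : 1 ≤ n) (x : Fin (n - 1) → Bool) (α β : ℝ)
    (hβ0 : 0 < β) (hβα : β < α) (hα1 : α ≤ 1)
    (p w : Fin n → ℝ)
    (hp : ∀ (i : ℕ) (h : i < n - 1), p ⟨i, by omega⟩ = if x ⟨i, h⟩ then (1 : ℝ) else 0)
    (hplast : p (lastIdx n hn) = β)
    (hw : ∀ i, w i = 1) :
    -- the singleton {n} is a feasible α-approximate solution iff all x_i = 0
    ((∑ i ∈ ({lastIdx n hn} : Finset (Fin n)), w i ≤ 1 ∧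
        α * KOPT p w 1 ≤ ∑ i ∈ ({lastIdx n hn} : Finset (Fin n)), p i) ↔ ∀ i, x i = false) ∧
    -- when all x_i = 0, it is the unique feasible solution of profit at least α·OPT
    ((∀ i, x i = false) → ∀ S : Finset (Fin n),
        ∑ i ∈ S, w i ≤ 1 → α * KOPT p w 1 ≤ ∑ i ∈ S, p i → S = {lastIdx n hn}) := by
  have hα0 : 0 < α := hβ0.trans hβα
  have hlast_feasible : ∑ i ∈ ({lastIdx n hn} : Finset (Fin n)), w i ≤ 1 := by simp [hw]
  have hsum_last : ∑ i ∈ ({lastIdx n hn} : Finset (Fin n)), p i = β := by simp [hplast]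
  have hp_zero (hx : ∀ i, x i = false) : ∀ i ≠ lastIdx n hn, p i = 0 := fun i hi => by
    have hi' : i.val < n - 1 := by
      by_contra h
      exact hi (Fin.ext (by simp only [lastIdx]; omega))
    simpa [hx] using hp i hi'
  have hKOPT (hx : ∀ i, x i = false) : KOPT p w 1 = β := by
    rw [KOPT_eq_of_forall_ne_eq_zero (hw _).le (hplast ▸ hβ0.le) (hp_zero hx), hplast]
  refine ⟨⟨fun ⟨_, happrox⟩ => ?_, fun hx => ⟨hlast_feasible, ?_⟩⟩, fun hx S hS happrox => ?_⟩
  · by_contra hx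
    obtain ⟨i, hi⟩ := not_forall.mp hx
    have hone : 1 ≤ KOPT p w 1 := by
      simpa [hw, hp i i.2, hi] using
        sum_le_KOPT (p := p) (w := w) (K := 1) (S := {⟨i, by omega⟩}) (by simp [hw])
    rw [hsum_last] at happrox
    exact hβα.not_ge ((le_mul_of_one_le_right hα0.le hone).trans happrox)
  · rw [hKOPT hx, hsum_last]
    exact mul_le_of_le_one_left hβ0.le hα1
  · rw [hKOPT hx] at happrox
    exact Finset.eq_singleton_of_card_le_one_of_sum_pos (hp_zero hx)
      (Finset.card_le_one_of_sum_le_one hw hS) (lt_of_lt_of_le (by positivity) happrox)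
end

section
/- Let D be a probability distribution on a finite set X, let δ ∈ (0,1], and let B = {x ∈ X : D(x) ≥ δ}. If X_1, …, X_m are drawn independently from D with m ≥ ⌈6·δ^{-1}·(ln(1/δ) + 1)⌉, then with probability at least 5/6 every element of B appears at least once among X_1, …, X_m. -/
/-!
An element `x` with `D x ≥ δ` is missed by all `m` samples with probability
`(1 - D x) ^ m ≤ (1 - δ) ^ m ≤ e^{-δm}`, and there are at most `1 / δ` elements of mass at
least `δ`. The union bound gives failure probability at most `δ⁻¹ e^{-δm}`, and the choice
of `m` makes `δm ≥ ln δ⁻¹ + ln 6`, so this is at most `1 / 6`.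
-/

open MeasureTheory Finset
open scoped ENNReal

lemma Real.one_sub_pow_le_div_six {δ : ℝ} (hδ0 : 0 < δ) (hδ1 : δ ≤ 1) {m : ℕ}
    (hm : 6 * δ⁻¹ * (Real.log δ⁻¹ + 1) ≤ m) : (1 - δ) ^ m ≤ δ / 6 := by
  have hδm : Real.log δ⁻¹ + Real.log 6 ≤ δ * m := by
    have hlog_nonneg : 0 ≤ Real.log δ⁻¹ := Real.log_nonneg (one_le_inv_iff₀.mpr ⟨hδ0, hδ1⟩)
    have hlog_six : Real.log 6 ≤ 5 := by
      linarith [Real.log_le_sub_one_of_pos (by norm_num : (0 : ℝ) < 6)]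
    have : 6 * (Real.log δ⁻¹ + 1) ≤ δ * m :=
      calc 6 * (Real.log δ⁻¹ + 1) = δ * (6 * δ⁻¹ * (Real.log δ⁻¹ + 1)) := by field_simp
        _ ≤ δ * m := by gcongr
    linarith
  calc (1 - δ) ^ m ≤ Real.exp (-δ) ^ m :=
        pow_le_pow_left₀ (by linarith) (Real.one_sub_le_exp_neg δ) m
    _ = Real.exp (-(δ * m)) := by rw [← Real.exp_nat_mul]; ring_nf
    _ ≤ Real.exp (-(Real.log δ⁻¹ + Real.log 6)) := Real.exp_le_exp.mpr (by linarith)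
    _ = δ / 6 := by
        rw [← Real.log_mul (by positivity) (by norm_num), ← Real.log_inv,
          Real.exp_log (by positivity)]
        field_simp

namespace PMF

variable {X : Type*}

lemma card_filter_le_apply_mul_le_one [Fintype X] (D : PMF X) (ε : ℝ≥0∞) :
    (#{x | ε ≤ D x} : ℝ≥0∞) * ε ≤ 1 :=
  calc (#{x | ε ≤ D x} : ℝ≥0∞) * ε = ∑ _x ∈ {x | ε ≤ D x}, ε := by
        rw [sum_const, nsmul_eq_mul]
    _ ≤ ∑ x ∈ {x | ε ≤ D x}, D x := sum_le_sum fun x hx => (mem_filter.mp hx).2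
    _ ≤ ∑' x, D x := ENNReal.sum_le_tsum _
    _ = 1 := D.tsum_coe

variable [MeasurableSpace X] [MeasurableSingletonClass X]

lemma toMeasure_compl_singleton (D : PMF X) (x : X) : D.toMeasure {x}ᶜ = 1 - D x := by
  rw [measure_compl (measurableSet_singleton x) (measure_ne_top _ _), measure_univ,
    D.toMeasure_apply_singleton x (measurableSet_singleton x)]

lemma pi_toMeasure_forall_ne {ι : Type*} [Fintype ι] (D : PMF X) (x : X) :
    Measure.pi (fun _ : ι => D.toMeasure) {f | ∀ i, f i ≠ x} = (1 - D x) ^ Fintype.card ι := by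
  have : {f : ι → X | ∀ i, f i ≠ x} = Set.univ.pi fun _ => {x}ᶜ := by ext f; simp
  rw [this, Measure.pi_pi, toMeasure_compl_singleton, prod_const, card_univ]

lemma pi_toMeasure_exists_forall_ne_le {ι : Type*} [Fintype ι] [Fintype X] (D : PMF X)
    (ε : ℝ≥0∞) :
    Measure.pi (fun _ : ι => D.toMeasure) {f | ∃ x, ε ≤ D x ∧ ∀ i, f i ≠ x}
      ≤ #{x | ε ≤ D x} * (1 - ε) ^ Fintype.card ι := by
  have : {f : ι → X | ∃ x, ε ≤ D x ∧ ∀ i, f i ≠ x}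
      = ⋃ x ∈ ({x | ε ≤ D x} : Finset X), {f | ∀ i, f i ≠ x} := by
    ext f; simp
  rw [this]
  calc _ ≤ ∑ x ∈ ({x | ε ≤ D x} : Finset X),
          Measure.pi (fun _ : ι => D.toMeasure) {f | ∀ i, f i ≠ x} :=
        measure_biUnion_finset_le _ _
    _ ≤ ∑ _x ∈ ({x | ε ≤ D x} : Finset X), (1 - ε) ^ Fintype.card ι := by
        refine sum_le_sum fun x hx => ?_
        rw [pi_toMeasure_forall_ne]
        exact pow_le_pow_left' (tsub_le_tsub_left (mem_filter.mp hx).2 1) _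
    _ = _ := by rw [sum_const, nsmul_eq_mul]

lemma pi_toMeasure_exists_forall_ne_le_one_div_six [Fintype X] (D : PMF X) {δ : ℝ}
    (hδ0 : 0 < δ) (hδ1 : δ ≤ 1) {m : ℕ} (hm : 6 * δ⁻¹ * (Real.log δ⁻¹ + 1) ≤ m) :
    Measure.pi (fun _ : Fin m => D.toMeasure) {f | ∃ x, ENNReal.ofReal δ ≤ D x ∧ ∀ k, f k ≠ x}
      ≤ 1 / 6 := by
  have hpow : (1 - ENNReal.ofReal δ) ^ m ≤ ENNReal.ofReal δ / 6 := by
    rw [← ENNReal.ofReal_one, ← ENNReal.ofReal_sub _ hδ0.le, ← ENNReal.ofReal_pow (by linarith),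
      ← ENNReal.ofReal_ofNat 6, ← ENNReal.ofReal_div_of_pos (by norm_num)]
    exact ENNReal.ofReal_le_ofReal (Real.one_sub_pow_le_div_six hδ0 hδ1 hm)
  calc _ ≤ #{x | ENNReal.ofReal δ ≤ D x} * (1 - ENNReal.ofReal δ) ^ m := by
        simpa using D.pi_toMeasure_exists_forall_ne_le (ι := Fin m) (ENNReal.ofReal δ)
    _ ≤ #{x | ENNReal.ofReal δ ≤ D x} * (ENNReal.ofReal δ / 6) := by gcongr
    _ ≤ 1 / 6 := by
        rw [← mul_div_assoc]
        gcongr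
        exact D.card_filter_le_apply_mul_le_one _

end PMF

theorem stmt4 {X : Type*} [Fintype X] [MeasurableSpace X] [MeasurableSingletonClass X]
    (D : PMF X) (δ : ℝ) (hδ0 : 0 < δ) (hδ1 : δ ≤ 1)
    (m : ℕ) (hm : ⌈6 * δ⁻¹ * (Real.log δ⁻¹ + 1)⌉₊ ≤ m) :
    -- with probability at least 5/6 (over m i.i.d. samples from D), every element
    -- of B = {x : D(x) ≥ δ} appears at least once among the samples
    (5 / 6 : ENNReal) ≤
      (Measure.pi fun _ : Fin m => D.toMeasure)
        {f | ∀ x : X, ENNReal.ofReal δ ≤ D x → ∃ k : Fin m, f k = x} := by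
  set μ := Measure.pi fun _ : Fin m => D.toMeasure
  set S := {f : Fin m → X | ∀ x : X, ENNReal.ofReal δ ≤ D x → ∃ k : Fin m, f k = x}
  have hmiss : μ Sᶜ ≤ 1 / 6 := by
    have hcompl : Sᶜ = {f | ∃ x, ENNReal.ofReal δ ≤ D x ∧ ∀ k, f k ≠ x} := by
      ext f; simp [S]
    rw [hcompl]
    exact D.pi_toMeasure_exists_forall_ne_le_one_div_six hδ0 hδ1 (Nat.ceil_le.mp hm)
  have hsplit : 1 ≤ μ S + μ Sᶜ := by simpa using measure_univ_le_add_compl (μ := μ) S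
  refine (ENNReal.add_le_add_iff_right (by norm_num : (1 / 6 : ℝ≥0∞) ≠ ⊤)).mp ?_
  calc (5 / 6 : ℝ≥0∞) + 1 / 6 = 1 := by
        rw [ENNReal.div_add_div_same, ENNReal.div_eq_one_iff] <;> norm_num
    _ ≤ μ S + μ Sᶜ := hsplit
    _ ≤ μ S + 1 / 6 := by gcongr
end

section
/- Let X be a linearly ordered countable set, D a probability distribution on X, p ∈ [0,1], and τ ∈ [0,1]. Let D' be the probability distribution on the set obtained from X by adjoining a new bottom element ⊥ and a new top element ⊤, defined by D'(⊥) = (1−p)/2, D'(⊤) = p/2, and D'(x) = D(x)/2 for every x ∈ X. If v ∈ X satisfies Pr_{Y∼D'}[Y ≤ v] ≥ 1/2 − τ/2 and Pr_{Y∼D'}[Y ≥ v] ≥ 1/2 − τ/2, then Pr_{Z∼D}[Z ≤ v] ≥ p − τ and Pr_{Z∼D}[Z ≥ v] ≥ 1 − p − τ; that is, v is a τ-approximate p-quantile of D. -/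
/-!
The set `{y ≤ v}` of the extended order is the atom `⊥` together with the image of `{z ≤ v}`,
whose mass under `D'` is half its mass under `D`. Hence `1/2 - τ/2 ≤ (1 - p)/2 + D{z ≤ v}/2`,
i.e. `D{z ≤ v} ≥ p - τ`; symmetrically, `{y ≥ v}` is `⊤` together with the image of `{z ≥ v}`.
-/

open Set Function
open scoped ENNReal

lemma ENNReal.ofReal_le_of_half_le_add {b c : ℝ} {q : ℝ≥0∞} (hb : 0 ≤ b)
    (h : ENNReal.ofReal ((b + c) / 2) ≤ ENNReal.ofReal (b / 2) + q / 2) :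
    ENNReal.ofReal c ≤ q := by
  rw [ENNReal.ofReal_div_of_pos two_pos, ENNReal.ofReal_div_of_pos two_pos, ENNReal.ofReal_ofNat,
    ← ENNReal.add_div, ENNReal.div_le_iff two_ne_zero ENNReal.ofNat_ne_top,
    ENNReal.div_mul_cancel two_ne_zero ENNReal.ofNat_ne_top] at h
  rwa [← add_sub_cancel_left b c, ENNReal.ofReal_sub _ hb, tsub_le_iff_left]

lemma WithBot.Iic_coe_coe {α : Type*} [Preorder α] (a : α) :
    Iic ((a : WithTop α) : WithBot (WithTop α)) =
      insert ⊥ ((fun x : α => ((x : WithTop α) : WithBot (WithTop α))) '' Iic a) := by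
  rw [WithBot.Iic_coe, WithTop.Iic_coe, image_image, union_singleton]

lemma WithBot.Ici_coe_coe {α : Type*} [Preorder α] (a : α) :
    Ici ((a : WithTop α) : WithBot (WithTop α)) =
      insert ((⊤ : WithTop α) : WithBot (WithTop α))
        ((fun x : α => ((x : WithTop α) : WithBot (WithTop α))) '' Ici a) := by
  rw [← WithBot.image_coe_Ici, WithTop.Ici_coe, image_union, image_image, image_singleton,
    union_singleton]

namespace PMF

variable {α β : Type*} (p : PMF α) (q : PMF β)

lemma toOuterMeasure_insert_le (b : β) (s : Set β) :
    q.toOuterMeasure (insert b s) ≤ q b + q.toOuterMeasure s := by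
  rw [insert_eq, ← toOuterMeasure_apply_singleton]
  exact MeasureTheory.measure_union_le _ _

lemma toOuterMeasure_image_of_injective {f : α → β} (hf : Injective f) {c : ℝ≥0∞}
    (h : ∀ a, q (f a) = p a / c) (s : Set α) :
    q.toOuterMeasure (f '' s) = p.toOuterMeasure s / c := by
  have hsupp : Function.support ((f '' s).indicator q) ⊆ range f :=
    support_indicator_subset.trans (image_subset_range f s)
  simp_rw [toOuterMeasure_apply, ← hf.tsum_eq hsupp, indicator_image hf, comp_def, h,
    div_eq_mul_inv, indicator_mul_const, ENNReal.tsum_mul_right]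

lemma ofReal_le_toOuterMeasure_of_insert_image {f : α → β} (hf : Injective f)
    (hhalf : ∀ a, q (f a) = p a / 2) {b : β} {m c : ℝ} (hm : 0 ≤ m)
    (hb : q b = ENNReal.ofReal (m / 2)) {s : Set α}
    (h : ENNReal.ofReal ((m + c) / 2) ≤ q.toOuterMeasure (insert b (f '' s))) :
    ENNReal.ofReal c ≤ p.toOuterMeasure s := by
  refine ENNReal.ofReal_le_of_half_le_add hm (h.trans ?_)
  calc q.toOuterMeasure (insert b (f '' s)) ≤ q b + q.toOuterMeasure (f '' s) :=
        toOuterMeasure_insert_le q b _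
    _ = ENNReal.ofReal (m / 2) + p.toOuterMeasure s / 2 := by
        rw [hb, toOuterMeasure_image_of_injective p q hf hhalf]

end PMF

theorem stmt5_general {X : Type*} [LinearOrder X]
    (D : PMF X) (D' : PMF (WithBot (WithTop X)))
    (p τ : ℝ) (hp0 : 0 ≤ p) (hp1 : p ≤ 1)
    -- D' puts mass (1-p)/2 on the new bottom element, p/2 on the new top element,
    -- and D(x)/2 on each x ∈ X
    (hbot : D' ⊥ = ENNReal.ofReal ((1 - p) / 2))
    (htop : D' ((⊤ : WithTop X) : WithBot (WithTop X)) = ENNReal.ofReal (p / 2))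
    (hmid : ∀ x : X, D' (((x : WithTop X) : WithBot (WithTop X))) = D x / 2)
    (v : X)
    -- v satisfies Pr_{Y∼D'}[Y ≤ v] ≥ 1/2 − τ/2 and Pr_{Y∼D'}[Y ≥ v] ≥ 1/2 − τ/2
    (hle : ENNReal.ofReal (1 / 2 - τ / 2) ≤
      D'.toOuterMeasure {y | y ≤ ((v : WithTop X) : WithBot (WithTop X))})
    (hge : ENNReal.ofReal (1 / 2 - τ / 2) ≤
      D'.toOuterMeasure {y | ((v : WithTop X) : WithBot (WithTop X)) ≤ y}) :
    -- then v is a τ-approximate p-quantile of D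
    ENNReal.ofReal (p - τ) ≤ D.toOuterMeasure {z | z ≤ v} ∧
    ENNReal.ofReal (1 - p - τ) ≤ D.toOuterMeasure {z | v ≤ z} := by
  have hemb : Injective fun x : X => ((x : WithTop X) : WithBot (WithTop X)) :=
    WithBot.coe_injective.comp WithTop.coe_injective
  constructor
  · refine D.ofReal_le_toOuterMeasure_of_insert_image D' hemb hmid (sub_nonneg.2 hp1) hbot
      (s := Iic v) ?_
    rw [← WithBot.Iic_coe_coe]
    exact (congrArg ENNReal.ofReal (by ring)).trans_le hle
  · refine D.ofReal_le_toOuterMeasure_of_insert_image D' hemb hmid hp0 htop (s := Ici v) ?_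
    rw [← WithBot.Ici_coe_coe]
    exact (congrArg ENNReal.ofReal (by ring)).trans_le hge

theorem stmt5 {X : Type*} [LinearOrder X] [Countable X]
    (D : PMF X) (D' : PMF (WithBot (WithTop X)))
    (p τ : ℝ) (hp0 : 0 ≤ p) (hp1 : p ≤ 1) (hτ0 : 0 ≤ τ) (hτ1 : τ ≤ 1)
    -- D' puts mass (1-p)/2 on the new bottom element, p/2 on the new top element,
    -- and D(x)/2 on each x ∈ X
    (hbot : D' ⊥ = ENNReal.ofReal ((1 - p) / 2))
    (htop : D' ((⊤ : WithTop X) : WithBot (WithTop X)) = ENNReal.ofReal (p / 2))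
    (hmid : ∀ x : X, D' (((x : WithTop X) : WithBot (WithTop X))) = D x / 2)
    (v : X)
    -- v satisfies Pr_{Y∼D'}[Y ≤ v] ≥ 1/2 − τ/2 and Pr_{Y∼D'}[Y ≥ v] ≥ 1/2 − τ/2
    (hle : ENNReal.ofReal (1 / 2 - τ / 2) ≤
      D'.toOuterMeasure {y | y ≤ ((v : WithTop X) : WithBot (WithTop X))})
    (hge : ENNReal.ofReal (1 / 2 - τ / 2) ≤
      D'.toOuterMeasure {y | ((v : WithTop X) : WithBot (WithTop X)) ≤ y}) :
    -- then v is a τ-approximate p-quantile of D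
    ENNReal.ofReal (p - τ) ≤ D.toOuterMeasure {z | z ≤ v} ∧
    ENNReal.ofReal (1 - p - τ) ≤ D.toOuterMeasure {z | v ≤ z} :=
  stmt5_general D D' p τ hp0 hp1 hbot htop hmid v hle hge
end

section
/- Let ε ∈ (0,1], let k be an integer with 1 ≤ k ≤ ⌊1/ε⌋, and let e_1 ≥ e_2 ≥ … ≥ e_k be positive real numbers. Then ⌊1/ε⌋ · ε² · Σ_{i=1}^{k} (1/e_i) ≥ (ε + ε²) · Σ_{i=1}^{k−2} (1/e_i), where the sum on the right-hand side is empty (equal to 0) when k ≤ 2. -/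
/-! Since `1/ε < ⌊1/ε⌋ + 1`, we have `ε + ε² ≤ (⌊1/ε⌋ + 2) ε²`. Writing `a_i = 1/e_i`, which is
nondecreasing, `2 ∑_{i ≤ k-2} a_i ≤ (k-2)(a_{k-1} + a_k) ≤ ⌊1/ε⌋ (a_{k-1} + a_k)`, so
`(⌊1/ε⌋ + 2) ∑_{i ≤ k-2} a_i ≤ ⌊1/ε⌋ ∑_{i ≤ k} a_i`. -/

open Finset

lemma add_sq_le_floor_one_div_add_two_mul_sq (ε : ℝ) : ε + ε ^ 2 ≤ (⌊1 / ε⌋₊ + 2) * ε ^ 2 := by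
  rcases le_or_gt ε 0 with hε | hε
  · rw [Nat.floor_of_nonpos (one_div_nonpos.mpr hε)]
    nlinarith
  · have hfloor : 1 < (⌊1 / ε⌋₊ + 1) * ε := (div_lt_iff₀ hε).mp (Nat.lt_floor_add_one (1 / ε))
    nlinarith

lemma sum_Icc_one_le_mul_of_monotoneOn {a : ℕ → ℝ} {n : ℕ}
    (ha : MonotoneOn a (Set.Icc 1 (n + 1))) : ∑ i ∈ Icc 1 n, a i ≤ n * a (n + 1) := by
  have hle : ∀ i ∈ Icc 1 n, a i ≤ a (n + 1) := fun i hi => by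
    rw [mem_Icc] at hi
    exact ha ⟨hi.1, by omega⟩ ⟨by omega, le_rfl⟩ (by omega)
  simpa using sum_le_card_nsmul _ _ _ hle

lemma add_two_mul_sum_Icc_le_mul_sum_Icc_add_two {a : ℕ → ℝ} {n N : ℕ} (hnN : n ≤ N)
    (ha : MonotoneOn a (Set.Icc 1 (n + 2))) (ha0 : 0 ≤ a (n + 1)) :
    (N + 2) * ∑ i ∈ Icc 1 n, a i ≤ N * ∑ i ∈ Icc 1 (n + 2), a i := by
  have hS : ∑ i ∈ Icc 1 n, a i ≤ n * a (n + 1) :=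
    sum_Icc_one_le_mul_of_monotoneOn (ha.mono (Set.Icc_subset_Icc_right (by omega)))
  have hstep : a (n + 1) ≤ a (n + 2) := ha ⟨by omega, by omega⟩ ⟨by omega, le_rfl⟩ (by omega)
  have hnN' : (n : ℝ) ≤ N := by exact_mod_cast hnN
  rw [sum_Icc_succ_top (by omega), sum_Icc_succ_top (by omega)]
  nlinarith

theorem stmt9_general (ε : ℝ)
    (k : ℕ) (hk : k ≤ ⌊1 / ε⌋₊)
    (e : ℕ → ℝ)
    (hpos : ∀ i, 1 ≤ i → i ≤ k → 0 < e i)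
    (hmono : ∀ i j, 1 ≤ i → i ≤ j → j ≤ k → e j ≤ e i) :
    (ε + ε ^ 2) * ∑ i ∈ Finset.Icc 1 (k - 2), 1 / e i ≤
      (⌊1 / ε⌋₊ : ℝ) * ε ^ 2 * ∑ i ∈ Finset.Icc 1 k, 1 / e i := by
  have hinv_mono : MonotoneOn (fun i => 1 / e i) (Set.Icc 1 k) := fun i hi j hj hij =>
    one_div_le_one_div_of_le (hpos j hj.1 hj.2) (hmono i j hi.1 hij hj.2)
  have hinv_nonneg : ∀ i ∈ Icc 1 k, 0 ≤ 1 / e i := fun i hi => by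
    rw [mem_Icc] at hi
    exact (one_div_pos.mpr (hpos i hi.1 hi.2)).le
  obtain hk2 | ⟨n, rfl⟩ : k < 2 ∨ ∃ n, k = n + 2 :=
    (lt_or_ge k 2).imp_right fun h => ⟨k - 2, by omega⟩
  · rw [Nat.sub_eq_zero_of_le hk2.le, Icc_eq_empty (by omega), sum_empty, mul_zero]
    exact mul_nonneg (by positivity) (sum_nonneg hinv_nonneg)
  have hS : 0 ≤ ∑ i ∈ Icc 1 n, 1 / e i :=
    sum_nonneg fun i hi => hinv_nonneg i (Icc_subset_Icc_right (by omega) hi)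
  calc (ε + ε ^ 2) * ∑ i ∈ Icc 1 (n + 2 - 2), 1 / e i
      ≤ ε ^ 2 * ((⌊1 / ε⌋₊ + 2) * ∑ i ∈ Icc 1 n, 1 / e i) := by
        rw [Nat.add_sub_cancel, ← mul_assoc, mul_comm (ε ^ 2)]
        exact mul_le_mul_of_nonneg_right (add_sq_le_floor_one_div_add_two_mul_sq ε) hS
    _ ≤ ε ^ 2 * (⌊1 / ε⌋₊ * ∑ i ∈ Icc 1 (n + 2), 1 / e i) := by
        gcongr ε ^ 2 * ?_
        exact add_two_mul_sum_Icc_le_mul_sum_Icc_add_two (by omega : n ≤ ⌊1 / ε⌋₊) hinv_mono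
          (hinv_nonneg _ (by simp))
    _ = _ := by ring

theorem stmt9 (ε : ℝ) (hε0 : 0 < ε) (hε1 : ε ≤ 1)
    (k : ℕ) (hk1 : 1 ≤ k) (hk : k ≤ ⌊1 / ε⌋₊)
    (e : ℕ → ℝ)
    (hpos : ∀ i, 1 ≤ i → i ≤ k → 0 < e i)
    (hmono : ∀ i j, 1 ≤ i → i ≤ j → j ≤ k → e j ≤ e i) :
    (ε + ε ^ 2) * ∑ i ∈ Finset.Icc 1 (k - 2), 1 / e i ≤
      (⌊1 / ε⌋₊ : ℝ) * ε ^ 2 * ∑ i ∈ Finset.Icc 1 k, 1 / e i :=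
  stmt9_general ε k hk e hpos hmono
end

section
/- Fix ε ∈ (0,1] and let I be a Knapsack instance whose items have positive weights and total profit 1. Let e_1 ≥ e_2 ≥ … ≥ e_t be an equally partitioning sequence (EPS) with respect to I. Then for every integer k with 3 ≤ k ≤ t, the total weight of the set {(p,w) ∈ S(I) : p/w ≥ e_{k−2}} is at most (ε + ε²) · Σ_{i=1}^{k−2} (1/e_i). -/
/-- The set of small items of the instance: profit at most `ε²` and efficiency
`p/w` at least `ε²`. -/
noncomputable def smallSet {ι : Type*} [Fintype ι] (ε : ℝ) (p w : ι → ℝ) : Finset ι :=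
  Finset.univ.filter (fun i => p i ≤ ε ^ 2 ∧ ε ^ 2 ≤ p i / w i)

/-- The total profit of the bucket `A_k(I)` of small items determined by the
efficiency thresholds `e 1 ≥ e 2 ≥ … ≥ e t`. -/
noncomputable def Aprofit {ι : Type*} [Fintype ι] (ε : ℝ) (p w : ι → ℝ)
    (t : ℕ) (e : ℕ → ℝ) (k : ℕ) : ℝ :=
  if k = 0 then ∑ i ∈ (smallSet ε p w).filter (fun i => e 1 ≤ p i / w i), p i
  else if k = t then ∑ i ∈ (smallSet ε p w).filter (fun i => p i / w i < e t), p i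
  else ∑ i ∈ (smallSet ε p w).filter (fun i => e (k + 1) ≤ p i / w i ∧ p i / w i < e k), p i

/-- `e 1 ≥ e 2 ≥ … ≥ e t` is an equally partitioning sequence (EPS) w.r.t. the
instance with profits `p` and weights `w`: a non-increasing sequence of positive
reals such that each bucket `A_k(I)` (`0 ≤ k ≤ t-1`) has total profit in
`[ε, ε+ε²)` and the last bucket `A_t(I)` has total profit in `[0, ε+ε²)`. -/
def IsEPS {ι : Type*} [Fintype ι] (ε : ℝ) (p w : ι → ℝ) (t : ℕ) (e : ℕ → ℝ) : Prop :=
  1 ≤ t ∧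
  (∀ k, 1 ≤ k → k ≤ t → 0 < e k) ∧
  (∀ k, 1 ≤ k → k < t → e (k + 1) ≤ e k) ∧
  (∀ k, k < t → ε ≤ Aprofit ε p w t e k ∧ Aprofit ε p w t e k < ε + ε ^ 2) ∧
  Aprofit ε p w t e t < ε + ε ^ 2

/-!
The small items of efficiency at least `e j` are exactly the buckets `A_0, …, A_{j-1}`.
Every item of `A_{i-1}` has efficiency at least `e i`, so its weight is at most its profit
divided by `e i`; since the profit of each bucket is below `ε + ε²`, the weight of `A_{i-1}`
is below `(ε + ε²) / e i`, and summing over `i = 1, …, j` gives the bound.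
-/

open Finset

theorem sum_le_mul_one_div_of_le_div {α : Type*} {s : Finset α} {p w : α → ℝ} {c B : ℝ}
    (hw : ∀ i ∈ s, 0 < w i) (hc : 0 < c) (hs : ∀ i ∈ s, c ≤ p i / w i)
    (hB : ∑ i ∈ s, p i ≤ B) :
    ∑ i ∈ s, w i ≤ B * (1 / c) :=
  calc ∑ i ∈ s, w i ≤ ∑ i ∈ s, p i / c := sum_le_sum fun i hi => by
        rw [le_div_iff₀ hc, mul_comm]
        exact (le_div_iff₀ (hw i hi)).1 (hs i hi)
    _ = (∑ i ∈ s, p i) * (1 / c) := by rw [← sum_div, div_eq_mul_one_div]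
    _ ≤ B * (1 / c) := by gcongr

theorem sum_filter_le_eq_add_sum_filter_Ico {α : Type*} {s : Finset α} {r f : α → ℝ}
    {a b : ℝ} (hab : a ≤ b) :
    ∑ i ∈ s.filter (fun i => a ≤ r i), f i =
      ∑ i ∈ s.filter (fun i => b ≤ r i), f i +
        ∑ i ∈ s.filter (fun i => a ≤ r i ∧ r i < b), f i := by
  rw [← sum_filter_add_sum_filter_not (s.filter (fun i => a ≤ r i)) (fun i => b ≤ r i),
    filter_filter, filter_filter]
  congr 1
  · exact sum_congr (filter_congr fun _ _ => ⟨And.right, fun h => ⟨hab.trans h, h⟩⟩)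
      fun _ _ => rfl
  · exact sum_congr (filter_congr fun _ _ => by rw [not_le]) fun _ _ => rfl

section EPS

variable {ι : Type*} [Fintype ι] {ε : ℝ} {p w : ι → ℝ} {t : ℕ} {e : ℕ → ℝ}

theorem Aprofit_zero :
    Aprofit ε p w t e 0 =
      ∑ i ∈ (smallSet ε p w).filter (fun i => e 1 ≤ p i / w i), p i := by
  rw [Aprofit, if_pos rfl]

theorem Aprofit_of_ne {j : ℕ} (hj0 : j ≠ 0) (hjt : j ≠ t) :
    Aprofit ε p w t e j = ∑ i ∈ (smallSet ε p w).filter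
      (fun i => e (j + 1) ≤ p i / w i ∧ p i / w i < e j), p i := by
  rw [Aprofit, if_neg hj0, if_neg hjt]

theorem IsEPS.sum_weight_filter_le (hw : ∀ i, 0 < w i) (hE : IsEPS ε p w t e)
    {j : ℕ} (hj1 : 1 ≤ j) (hjt : j ≤ t) :
    ∑ i ∈ (smallSet ε p w).filter (fun i => e j ≤ p i / w i), w i ≤
      (ε + ε ^ 2) * ∑ i ∈ Icc 1 j, 1 / e i := by
  obtain ⟨ht, hpos, hmono, hbuckets, -⟩ := hE
  induction j, hj1 using Nat.le_induction with
  | base =>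
    rw [Icc_self, sum_singleton]
    refine sum_le_mul_one_div_of_le_div (fun i _ => hw i) (hpos 1 le_rfl ht)
      (fun i hi => (mem_filter.1 hi).2) ?_
    rw [← Aprofit_zero]
    exact (hbuckets 0 (by omega)).2.le
  | succ j hj1 ih =>
    have hbucket : ∑ i ∈ (smallSet ε p w).filter
        (fun i => e (j + 1) ≤ p i / w i ∧ p i / w i < e j), w i ≤
          (ε + ε ^ 2) * (1 / e (j + 1)) := by
      refine sum_le_mul_one_div_of_le_div (fun i _ => hw i) (hpos (j + 1) (by omega) hjt)
        (fun i hi => (mem_filter.1 hi).2.1) ?_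
      rw [← Aprofit_of_ne (by omega : j ≠ 0) (by omega : j ≠ t)]
      exact (hbuckets j (by omega)).2.le
    rw [sum_filter_le_eq_add_sum_filter_Ico (hmono j hj1 (by omega)),
      sum_Icc_succ_top (by omega), mul_add]
    exact add_le_add (ih (by omega)) hbucket

end EPS

theorem stmt10_general {ι : Type*} [Fintype ι] (ε : ℝ)
    (p w : ι → ℝ) (hw : ∀ i, 0 < w i)
    (t : ℕ) (e : ℕ → ℝ) (hEPS : IsEPS ε p w t e)
    (k : ℕ) (hk3 : 3 ≤ k) (hkt : k ≤ t) :
    -- the total weight of the small items of efficiency at least e (k-2) is at most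
    -- (ε + ε²) · Σ_{i=1}^{k-2} 1/e i
    ∑ i ∈ (smallSet ε p w).filter (fun i => e (k - 2) ≤ p i / w i), w i ≤
      (ε + ε ^ 2) * ∑ j ∈ Finset.Icc 1 (k - 2), 1 / e j :=
  hEPS.sum_weight_filter_le hw (j := k - 2) (by omega) (by omega)

theorem stmt10 {ι : Type*} [Fintype ι] (ε : ℝ) (hε0 : 0 < ε) (hε1 : ε ≤ 1)
    (p w : ι → ℝ) (hp : ∀ i, 0 ≤ p i) (hw : ∀ i, 0 < w i)
    (htot : ∑ i, p i = 1)
    (t : ℕ) (e : ℕ → ℝ) (hEPS : IsEPS ε p w t e)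
    (k : ℕ) (hk3 : 3 ≤ k) (hkt : k ≤ t) :
    -- the total weight of the small items of efficiency at least e (k-2) is at most
    -- (ε + ε²) · Σ_{i=1}^{k-2} 1/e i
    ∑ i ∈ (smallSet ε p w).filter (fun i => e (k - 2) ≤ p i / w i), w i ≤
      (ε + ε ^ 2) * ∑ j ∈ Finset.Icc 1 (k - 2), 1 / e j :=
  stmt10_general ε p w hw t e hEPS k hk3 hkt
end

section
/- Fix ε ∈ (0,1] and let I = (S, K) be a Knapsack instance whose items have positive weights, total profit 1, and every item weight at most K. Let e_1 ≥ e_2 ≥ … ≥ e_t be an equally partitioning sequence (EPS) with respect to I, let Ĩ be the instance constructed from I and this EPS, and assume every item of Ĩ has weight at most K. Let C be the item set of I produced by the greedy-conversion procedure applied to Ĩ and the EPS. Then C is a feasible solution of I, i.e., the total weight of C is at most K. -/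
/-- The index set of the large items, i.e. those of profit greater than `ε²`. -/
abbrev LargeIdx {ι : Type*} (ε : ℝ) (p : ι → ℝ) : Type _ := {i : ι // ε ^ 2 < p i}

/-- The index set of the constructed instance `Ĩ`: all large items of `I`,
together with `⌊1/ε⌋` copies of a representative item for each of the `t`
efficiency buckets. -/
abbrev TildeIdx {ι : Type*} (ε : ℝ) (p : ι → ℝ) (t : ℕ) : Type _ :=
  LargeIdx ε p ⊕ (Fin t × Fin ⌊1 / ε⌋₊)

/-- Profits of the constructed instance `Ĩ`: a large item keeps its profit,
and each representative copy has profit `ε²`. -/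
noncomputable def tildeP {ι : Type*} (ε : ℝ) (p : ι → ℝ) (t : ℕ) :
    TildeIdx ε p t → ℝ :=
  Sum.elim (fun l => p l.1) (fun _ => ε ^ 2)

/-- Weights of the constructed instance `Ĩ`: a large item keeps its weight,
and each copy in bucket `k` (for `0 ≤ k ≤ t-1`) has weight `ε²/e (k+1)`. -/
noncomputable def tildeW {ι : Type*} (ε : ℝ) (p w : ι → ℝ) (t : ℕ) (e : ℕ → ℝ) :
    TildeIdx ε p t → ℝ :=
  Sum.elim (fun l => w l.1) (fun kc => ε ^ 2 / e ((kc.1 : ℕ) + 1))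

/-- Total weight (in `Ĩ`) of the first `J` items in the sorted order `σ`. -/
noncomputable def prefW {ι : Type*} [Fintype ι] (ε : ℝ) (p w : ι → ℝ) (t : ℕ) (e : ℕ → ℝ)
    {m : ℕ} (σ : Fin m → TildeIdx ε p t) (J : ℕ) : ℝ :=
  ∑ a ∈ Finset.univ.filter (fun a : Fin m => (a : ℕ) < J), tildeW ε p w t e (σ a)

/-- Total profit (in `Ĩ`) of the first `J` items in the sorted order `σ`. -/
noncomputable def prefP {ι : Type*} [Fintype ι] (ε : ℝ) (p : ι → ℝ) (t : ℕ)
    {m : ℕ} (σ : Fin m → TildeIdx ε p t) (J : ℕ) : ℝ :=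
  ∑ a ∈ Finset.univ.filter (fun a : Fin m => (a : ℕ) < J), tildeP ε p t (σ a)

open Finset

theorem mul_sum_le_sum_of_le_div {α : Type*} {s : Finset α} {p w : α → ℝ} {c : ℝ}
    (hw : ∀ i ∈ s, 0 < w i) (hc : ∀ i ∈ s, c ≤ p i / w i) :
    c * ∑ i ∈ s, w i ≤ ∑ i ∈ s, p i := by
  rw [mul_sum]
  exact sum_le_sum fun i hi => (le_div_iff₀ (hw i hi)).mp (hc i hi)

theorem sub_sq_le_floor_inv_mul_sq {ε : ℝ} (hε : 0 < ε) : ε - ε ^ 2 ≤ ⌊1 / ε⌋₊ * ε ^ 2 :=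
  calc ε - ε ^ 2 = (1 / ε - 1) * ε ^ 2 := by field_simp
    _ ≤ ⌊1 / ε⌋₊ * ε ^ 2 := by gcongr; exact (Nat.sub_one_lt_floor _).le

theorem two_mul_sum_range_le {a : ℕ → ℝ} {N n : ℕ} (ha : MonotoneOn a (Set.Iic (N + 1)))
    (ha0 : 0 ≤ a 0) (hN : N ≤ n) : 2 * ∑ j ∈ range N, a j ≤ n * (a N + a (N + 1)) := by
  have mem : ∀ {j}, j ≤ N + 1 → j ∈ Set.Iic (N + 1) := Set.mem_Iic.mpr
  have haN : 0 ≤ a N := ha0.trans (ha (mem (by omega)) (mem (by omega)) (Nat.zero_le N))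
  have hsum : ∑ j ∈ range N, a j ≤ n * a N :=
    calc ∑ j ∈ range N, a j ≤ ∑ _j ∈ range N, a N :=
          sum_le_sum fun j hj => by
            have := mem_range.mp hj; exact ha (mem (by omega)) (mem (by omega)) this.le
      _ = N * a N := by simp
      _ ≤ n * a N := by gcongr
  have hNN : a N ≤ a (N + 1) := ha (mem (by omega)) (mem le_rfl) (by omega)
  nlinarith

/-- Applied with `a j = 1 / e (j+1)`: buckets `0, …, N-1`, each of profit below `ε + ε²`, weigh
at most the `⌊1/ε⌋` copies, of weight `ε² a j`, of the buckets `0, …, N+1`. -/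
theorem add_sq_mul_sum_range_le {ε : ℝ} (hε : 0 < ε) {a : ℕ → ℝ} {N : ℕ}
    (ha : MonotoneOn a (Set.Iic (N + 1))) (ha0 : 0 ≤ a 0) (hN : N ≤ ⌊1 / ε⌋₊) :
    (ε + ε ^ 2) * ∑ j ∈ range N, a j ≤ ⌊1 / ε⌋₊ * ε ^ 2 * ∑ j ∈ range (N + 2), a j := by
  have hS : 0 ≤ ∑ j ∈ range N, a j :=
    sum_nonneg fun j hj => ha0.trans <|
      ha (Set.mem_Iic.mpr (Nat.zero_le _)) (Set.mem_Iic.mpr (by simp at hj; omega)) (Nat.zero_le j)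
  have h1 := mul_le_mul_of_nonneg_right (sub_sq_le_floor_inv_mul_sq hε) hS
  have h2 := mul_le_mul_of_nonneg_left (two_mul_sum_range_le ha ha0 hN) (sq_nonneg ε)
  rw [sum_range_succ, sum_range_succ]
  nlinarith

theorem sum_filter_fst_lt {t n k : ℕ} (f : ℕ → ℝ) (hk : k ≤ t) :
    ∑ c ∈ univ.filter (fun c : Fin t × Fin n => (c.1 : ℕ) < k), f c.1 =
      n * ∑ j ∈ range k, f j := by
  rw [sum_filter, Fintype.sum_prod_type]
  simp only [sum_const, card_univ, Fintype.card_fin, nsmul_eq_mul, ← mul_sum]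
  rw [Fin.sum_univ_eq_sum_range (fun j => if j < k then f j else 0), ← sum_filter]
  congr 2
  ext j
  simp only [mem_filter, mem_range]
  omega

theorem sum_le_sum_subtype_add_sum {α : Type*} {P : α → Prop} [DecidableEq α]
    {w : α → ℝ} {C D : Finset α} {L : Finset (Subtype P)} (hw : ∀ i, 0 ≤ w i)
    (hC : ∀ i ∈ C, (∃ hi : P i, ⟨i, hi⟩ ∈ L) ∨ i ∈ D) :
    ∑ i ∈ C, w i ≤ ∑ l ∈ L, w l.1 + ∑ i ∈ D, w i := by
  have hsub : C ⊆ L.map (Function.Embedding.subtype P) ∪ D := fun i hi => by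
    obtain ⟨_, hiL⟩ | hiD := hC i hi
    · exact mem_union_left _ (mem_map.mpr ⟨_, hiL, rfl⟩)
    · exact mem_union_right _ hiD
  have hinter := sum_union_inter (s₁ := L.map (Function.Embedding.subtype P)) (s₂ := D) (f := w)
  rw [sum_map] at hinter
  have := sum_le_sum_of_subset_of_nonneg hsub fun i _ _ => hw i
  have := sum_nonneg fun i (_ : i ∈ L.map (Function.Embedding.subtype P) ∩ D) => hw i
  simp only [Function.Embedding.subtype_apply] at hinter
  linarith

section EPS

variable {ι : Type*} [Fintype ι] {ε : ℝ} {p w : ι → ℝ} {t : ℕ} {e : ℕ → ℝ}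

/-- The bucket `A_j(I)`, for `j < t`. -/
noncomputable def bucket (ε : ℝ) (p w : ι → ℝ) (e : ℕ → ℝ) (j : ℕ) : Finset ι :=
  (smallSet ε p w).filter fun i => e (j + 1) ≤ p i / w i ∧ (j ≠ 0 → p i / w i < e j)

theorem sum_bucket_eq_Aprofit {j : ℕ} (hj : j < t) :
    ∑ i ∈ bucket ε p w e j, p i = Aprofit ε p w t e j := by
  unfold bucket Aprofit
  rcases Nat.eq_zero_or_pos j with rfl | hj0
  · simp
  · rw [if_neg hj0.ne', if_neg hj.ne]
    congr 1
    exact filter_congr fun i _ => by simp [hj0.ne', and_comm]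

theorem mem_biUnion_bucket [DecidableEq ι] {N : ℕ} {i : ι} (hN : 1 ≤ N) (hi : i ∈ smallSet ε p w)
    (hei : e N ≤ p i / w i) : i ∈ (range N).biUnion (bucket ε p w e) := by
  induction N, hN using Nat.le_induction with
  | base => exact mem_biUnion.mpr ⟨0, by simp, mem_filter.mpr ⟨hi, hei, by simp⟩⟩
  | succ N hN ih =>
    by_cases h : e N ≤ p i / w i
    · exact biUnion_subset_biUnion_of_subset_left _ (range_subset_range.mpr N.le_succ) (ih h)
    · exact mem_biUnion.mpr ⟨N, by simp, mem_filter.mpr ⟨hi, hei, fun _ => not_le.mp h⟩⟩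

namespace IsEPS

variable (h : IsEPS ε p w t e)
include h

theorem pos {k : ℕ} (hk : 1 ≤ k) (hkt : k ≤ t) : 0 < e k := h.2.1 k hk hkt

theorem le_sum_bucket {j : ℕ} (hj : j < t) : ε ≤ ∑ i ∈ bucket ε p w e j, p i :=
  by rw [sum_bucket_eq_Aprofit hj]; exact (h.2.2.2.1 j hj).1

theorem sum_bucket_lt {j : ℕ} (hj : j < t) : ∑ i ∈ bucket ε p w e j, p i < ε + ε ^ 2 :=
  by rw [sum_bucket_eq_Aprofit hj]; exact (h.2.2.2.1 j hj).2

theorem antitoneOn : AntitoneOn e (Set.Icc 1 t) :=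
  antitoneOn_of_succ_le Set.ordConnected_Icc fun k _ hk hk' =>
    h.2.2.1 k hk.1 (by simp at hk'; omega)

theorem pairwiseDisjoint_bucket :
    (↑(range t) : Set ℕ).PairwiseDisjoint (bucket ε p w e) := by
  have key : ∀ a b, a < b → b < t → Disjoint (bucket ε p w e a) (bucket ε p w e b) := by
    intro a b hab hbt
    refine disjoint_left.mpr fun i hia hib => ?_
    have h1 := (mem_filter.mp hia).2.1
    have h2 := (mem_filter.mp hib).2.2 (by omega)
    have h3 := h.antitoneOn ⟨by omega, by omega⟩ ⟨by omega, hbt.le⟩ (show a + 1 ≤ b by omega)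
    linarith
  intro a ha b hb hab
  simp only [coe_range, Set.mem_Iio] at ha hb
  rcases lt_or_gt_of_ne hab with hlt | hlt
  · exact key a b hlt hb
  · exact (key b a hlt ha).symm

theorem mul_le_one (hp : ∀ i, 0 ≤ p i) (htot : ∑ i, p i = 1) : t * ε ≤ 1 := by
  classical
  calc (t : ℝ) * ε = ∑ _j ∈ range t, ε := by simp
    _ ≤ ∑ j ∈ range t, ∑ i ∈ bucket ε p w e j, p i :=
        sum_le_sum fun j hj => h.le_sum_bucket (mem_range.mp hj)
    _ = ∑ i ∈ (range t).biUnion (bucket ε p w e), p i :=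
        (sum_biUnion h.pairwiseDisjoint_bucket).symm
    _ ≤ ∑ i, p i := sum_le_sum_of_subset_of_nonneg (subset_univ _) fun i _ _ => hp i
    _ = 1 := htot

theorem le_floor (hε : 0 < ε) (hp : ∀ i, 0 ≤ p i) (htot : ∑ i, p i = 1) : t ≤ ⌊1 / ε⌋₊ :=
  Nat.le_floor <| (le_div_iff₀ hε).mpr (h.mul_le_one hp htot)

theorem mul_sum_weight_bucket_le (hw : ∀ i, 0 < w i) {j : ℕ} (hj : j < t) :
    e (j + 1) * ∑ i ∈ bucket ε p w e j, w i ≤ ε + ε ^ 2 :=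
  calc e (j + 1) * ∑ i ∈ bucket ε p w e j, w i ≤ ∑ i ∈ bucket ε p w e j, p i :=
        mul_sum_le_sum_of_le_div (fun i _ => hw i) fun _ hi => (mem_filter.mp hi).2.1
    _ ≤ ε + ε ^ 2 := (h.sum_bucket_lt hj).le

theorem sum_weight_small_le (hw : ∀ i, 0 < w i) {N : ℕ} (hN : 1 ≤ N) (hNt : N ≤ t) :
    ∑ i ∈ (smallSet ε p w).filter (fun i => e N ≤ p i / w i), w i ≤
      (ε + ε ^ 2) * ∑ j ∈ range N, (e (j + 1))⁻¹ := by
  classical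
  calc ∑ i ∈ (smallSet ε p w).filter (fun i => e N ≤ p i / w i), w i
      ≤ ∑ i ∈ (range N).biUnion (bucket ε p w e), w i :=
        sum_le_sum_of_subset_of_nonneg
          (fun i hi => mem_biUnion_bucket hN (mem_filter.mp hi).1 (mem_filter.mp hi).2)
          fun i _ _ => (hw i).le
    _ = ∑ j ∈ range N, ∑ i ∈ bucket ε p w e j, w i :=
        sum_biUnion (h.pairwiseDisjoint_bucket.subset (by simpa using hNt))
    _ ≤ ∑ j ∈ range N, (ε + ε ^ 2) * (e (j + 1))⁻¹ := sum_le_sum fun j hj => by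
        have hj := mem_range.mp hj
        rw [← div_eq_mul_inv, le_div_iff₀ (h.pos (by omega) (by omega)), mul_comm]
        exact h.mul_sum_weight_bucket_le hw (by omega)
    _ = (ε + ε ^ 2) * ∑ j ∈ range N, (e (j + 1))⁻¹ := (mul_sum _ _ _).symm

end IsEPS

end EPS

section Tilde

variable {ι : Type*} {ε : ℝ} {p w : ι → ℝ} {t : ℕ} {e : ℕ → ℝ}

theorem sq_le_tildeP (x : TildeIdx ε p t) : ε ^ 2 ≤ tildeP ε p t x := by
  rcases x with l | c
  · exact l.2.le
  · exact le_rfl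

theorem tildeP_inr_div_tildeW_inr (hε : ε ≠ 0) (c : Fin t × Fin ⌊1 / ε⌋₊) :
    tildeP ε p t (.inr c) / tildeW ε p w t e (.inr c) = e (c.1 + 1) :=
  div_div_cancel₀ (pow_ne_zero 2 hε)

variable {m : ℕ}

def prefixItems (σ : Fin m ↪ TildeIdx ε p t) (J : ℕ) : Finset (TildeIdx ε p t) :=
  (univ.filter fun a : Fin m => (a : ℕ) < J).map σ

theorem prefW_eq_sum_toLeft_add_sum_toRight [Fintype ι] (σ : Fin m ↪ TildeIdx ε p t) (J : ℕ) :
    prefW ε p w t e σ J = ∑ l ∈ (prefixItems σ J).toLeft, w l.1 +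
      ∑ c ∈ (prefixItems σ J).toRight, ε ^ 2 / e (c.1 + 1) := by
  rw [prefW, ← sum_map _ σ (tildeW ε p w t e), sum_sum_eq_sum_toLeft_add_sum_toRight]
  rfl

theorem mem_toRight_prefixItems (hε : ε ≠ 0) {σ : Fin m ↪ TildeIdx ε p t}
    (hσ : Function.Surjective σ)
    (hsort : Antitone fun a => tildeP ε p t (σ a) / tildeW ε p w t e (σ a))
    {J : ℕ} {a : Fin m} (ha : (a : ℕ) < J) {c : Fin t × Fin ⌊1 / ε⌋₊}
    (hc : tildeP ε p t (σ a) / tildeW ε p w t e (σ a) < e (c.1 + 1)) :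
    c ∈ (prefixItems σ J).toRight := by
  obtain ⟨b, hb⟩ := hσ (.inr c)
  have hba : b < a := hsort.reflect_lt (by rwa [hb, tildeP_inr_div_tildeW_inr hε])
  exact mem_toRight.mpr (mem_map.mpr ⟨b, mem_filter.mpr ⟨mem_univ b, by omega⟩, hb⟩)

theorem exists_eq_inl_of_prefP_lt [Fintype ι] {σ : Fin m → TildeIdx ε p t} {J : ℕ}
    (hJ : 0 < J) (hJm : J < m) (h : prefP ε p t σ J < tildeP ε p t (σ ⟨J, hJm⟩)) :
    ∃ l, σ ⟨J, hJm⟩ = .inl l := by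
  rcases hx : σ ⟨J, hJm⟩ with l | c
  · exact ⟨l, rfl⟩
  · have hfirst : ε ^ 2 ≤ prefP ε p t σ J :=
      (sq_le_tildeP (σ ⟨0, by omega⟩)).trans <|
        single_le_sum (fun a _ => (sq_nonneg ε).trans (sq_le_tildeP _))
          (mem_filter.mpr ⟨mem_univ _, hJ⟩)
    rw [hx] at h
    exact absurd h (not_lt.mpr hfirst)

end Tilde

section GreedySmall

variable {ι : Type*} [Fintype ι] {ε : ℝ} {p w : ι → ℝ} {t : ℕ} {e : ℕ → ℝ}

noncomputable def greedySmall (ε : ℝ) (p w : ι → ℝ) (e : ℕ → ℝ) (k : ℕ) : Finset ι :=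
  univ.filter fun i => 3 ≤ k ∧ p i ≤ ε ^ 2 ∧ ε ^ 2 ≤ p i / w i ∧ e (k - 2) ≤ p i / w i

namespace IsEPS

variable (h : IsEPS ε p w t e) (hε : 0 < ε) (hp : ∀ i, 0 ≤ p i) (hw : ∀ i, 0 < w i)
  (htot : ∑ i, p i = 1)
include h hε hp hw htot

theorem sum_weight_greedySmall_le {k : ℕ} (hkt : k ≤ t) :
    ∑ i ∈ greedySmall ε p w e k, w i ≤ ⌊1 / ε⌋₊ * ∑ j ∈ range k, ε ^ 2 / e (j + 1) := by
  have hpos : ∀ j < k, 0 < e (j + 1) := fun j hj => h.pos (by omega) (by omega)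
  rw [mul_sum]
  by_cases hk : 3 ≤ k
  · obtain ⟨N, rfl⟩ : ∃ N, k = N + 2 := ⟨k - 2, by omega⟩
    have hsmall : greedySmall ε p w e (N + 2) =
        (smallSet ε p w).filter (fun i => e N ≤ p i / w i) := by
      ext i
      simp [greedySmall, smallSet, hk, and_assoc]
    have hmono : MonotoneOn (fun j => (e (j + 1))⁻¹) (Set.Iic (N + 1)) := fun i hi j hj hij =>
      inv_anti₀ (hpos j (by simp at hj; omega))
        (h.antitoneOn ⟨by omega, by simp at hi; omega⟩ ⟨by omega, by simp at hj; omega⟩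
          (by omega))
    calc _ ≤ (ε + ε ^ 2) * ∑ j ∈ range N, (e (j + 1))⁻¹ := by
          rw [hsmall]; exact h.sum_weight_small_le hw (by omega) (by omega)
      _ ≤ ⌊1 / ε⌋₊ * ε ^ 2 * ∑ j ∈ range (N + 2), (e (j + 1))⁻¹ :=
          add_sq_mul_sum_range_le hε hmono (inv_nonneg.mpr (hpos 0 (by omega)).le)
            ((h.le_floor hε hp htot).trans' (by omega))
      _ = _ := by simp only [mul_sum, div_eq_mul_inv, mul_assoc]
  · rw [greedySmall, filter_false_of_mem fun i _ hi => hk hi.1, sum_empty]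
    exact sum_nonneg fun j hj => by have := hpos j (mem_range.mp hj); positivity

theorem sum_weight_greedySmall_le_sum_copies {k : ℕ} (hkt : k ≤ t)
    {S : Finset (Fin t × Fin ⌊1 / ε⌋₊)} (hS : univ.filter (fun c => (c.1 : ℕ) < k) ⊆ S) :
    ∑ i ∈ greedySmall ε p w e k, w i ≤ ∑ c ∈ S, ε ^ 2 / e (c.1 + 1) :=
  calc ∑ i ∈ greedySmall ε p w e k, w i
      ≤ ⌊1 / ε⌋₊ * ∑ j ∈ range k, ε ^ 2 / e (j + 1) :=
        h.sum_weight_greedySmall_le hε hp hw htot hkt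
    _ = ∑ c ∈ univ.filter (fun c : Fin t × Fin ⌊1 / ε⌋₊ => (c.1 : ℕ) < k), ε ^ 2 / e (c.1 + 1) :=
        (sum_filter_fst_lt (fun j => ε ^ 2 / e (j + 1)) hkt).symm
    _ ≤ ∑ c ∈ S, ε ^ 2 / e (c.1 + 1) := sum_le_sum_of_subset_of_nonneg hS fun c _ _ => by
        have := h.pos (k := c.1 + 1) (by omega) (by omega)
        positivity

end IsEPS

end GreedySmall

theorem stmt13 {ι : Type*} [Fintype ι] (ε : ℝ) (hε0 : 0 < ε)
    (p w : ι → ℝ) (K : ℝ)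
    (hp : ∀ i, 0 ≤ p i) (hw : ∀ i, 0 < w i)
    (htot : ∑ i, p i = 1) (hwK : ∀ i, w i ≤ K)
    (t : ℕ) (e : ℕ → ℝ) (hEPS : IsEPS ε p w t e)
    -- σ sorts the m items of Ĩ by non-increasing efficiency (arbitrary tie-breaking)
    (m : ℕ)
    (σ : Fin m → TildeIdx ε p t) (hσ : Function.Bijective σ)
    (hsort : ∀ a b : Fin m, a ≤ b →
      tildeP ε p t (σ b) / tildeW ε p w t e (σ b) ≤
        tildeP ε p t (σ a) / tildeW ε p w t e (σ a))
    -- J is the largest index such that the first J items fit in the knapsack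
    (J : ℕ) (hJ1 : 1 ≤ J) (hJm : J ≤ m)
    (hJfeas : prefW ε p w t e σ J ≤ K)
    -- k is the largest index (in 1..t) with e k > (efficiency of the J-th item),
    -- and k = 0 if there is none
    (k : ℕ) (hkt : k ≤ t)
    (hkchar : ∀ l, 1 ≤ l → l ≤ t →
      (tildeP ε p t (σ ⟨J - 1, by omega⟩) / tildeW ε p w t e (σ ⟨J - 1, by omega⟩) < e l
        ↔ l ≤ k))
    -- C is the item set of I produced by the greedy-conversion procedure:
    (C : Finset ι)
    -- first case: J = m, or the total profit of the first J items is at least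
    -- the profit of the (J+1)-st item: C consists of the large items of I
    -- appearing among the first J sorted items of Ĩ, together (when k ≥ 3) with
    -- the small items of I of efficiency at least e (k-2)
    (hC1 : (J = m ∨ ∃ h : J < m, tildeP ε p t (σ ⟨J, h⟩) ≤ prefP ε p t σ J) →
      ∀ i : ι, i ∈ C ↔
        ((∃ a : Fin m, (a : ℕ) < J ∧ ∃ hi : ε ^ 2 < p i, σ a = Sum.inl ⟨i, hi⟩) ∨
         (3 ≤ k ∧ p i ≤ ε ^ 2 ∧ ε ^ 2 ≤ p i / w i ∧ e (k - 2) ≤ p i / w i)))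
    -- second case: otherwise C is the singleton consisting of the item of I
    -- equal to the (J+1)-st sorted item of Ĩ
    (hC2 : ∀ h : J < m, prefP ε p t σ J < tildeP ε p t (σ ⟨J, h⟩) →
      ∀ l : LargeIdx ε p, σ ⟨J, h⟩ = Sum.inl l → C = {l.1}) :
    -- then C is a feasible solution of I
    ∑ i ∈ C, w i ≤ K := by
  classical
  let σ' : Fin m ↪ TildeIdx ε p t := ⟨σ, hσ.1⟩
  by_cases hcase : J = m ∨ ∃ h : J < m, tildeP ε p t (σ ⟨J, h⟩) ≤ prefP ε p t σ J
  · have hC : ∀ i ∈ C, (∃ hi : ε ^ 2 < p i, ⟨i, hi⟩ ∈ (prefixItems σ' J).toLeft) ∨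
        i ∈ greedySmall ε p w e k := fun i hi => by
      rcases (hC1 hcase i).mp hi with ⟨a, ha, hi, hσa⟩ | hsmall
      · exact .inl ⟨hi, mem_toLeft.mpr (mem_map.mpr ⟨a, mem_filter.mpr ⟨mem_univ a, ha⟩, hσa⟩)⟩
      · exact .inr (mem_filter.mpr ⟨mem_univ i, hsmall⟩)
    have hcopies : univ.filter (fun c : Fin t × Fin ⌊1 / ε⌋₊ => (c.1 : ℕ) < k) ⊆
        (prefixItems σ' J).toRight := fun c hc =>
      mem_toRight_prefixItems hε0.ne' hσ.2 (fun a b hab => hsort a b hab)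
        (show J - 1 < J by omega) ((hkchar _ (by omega) (by omega)).mpr (mem_filter.mp hc).2)
    calc ∑ i ∈ C, w i
        ≤ ∑ l ∈ (prefixItems σ' J).toLeft, w l.1 + ∑ i ∈ greedySmall ε p w e k, w i :=
          sum_le_sum_subtype_add_sum (fun i => (hw i).le) hC
      _ ≤ ∑ l ∈ (prefixItems σ' J).toLeft, w l.1 +
            ∑ c ∈ (prefixItems σ' J).toRight, ε ^ 2 / e (c.1 + 1) :=
          add_le_add le_rfl
            (hEPS.sum_weight_greedySmall_le_sum_copies hε0 hp hw htot hkt hcopies)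
      _ = prefW ε p w t e σ J := (prefW_eq_sum_toLeft_add_sum_toRight σ' J).symm
      _ ≤ K := hJfeas
  · simp only [not_or, not_exists, not_le] at hcase
    have hJm' : J < m := lt_of_le_of_ne hJm hcase.1
    obtain ⟨l, hl⟩ := exists_eq_inl_of_prefP_lt hJ1 hJm' (hcase.2 hJm')
    rw [hC2 hJm' (hcase.2 hJm') l hl, sum_singleton]
    exact hwK l.1
end
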